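/- arXiv:2101.03627 — 2 statements merged into one kernel-verified Lean document; each statement's English description precedes it below -/
import Mathlib

section
/- (Proposition 3) Fix α ∈ [0, 1] and for each service n define g_n(b) = (1 − α)·f*_n(b) + α·log(1 + f*_n(b)). Then each g_n is strictly increasing and concave on [0, ∞). Moreover, if (b*_1, …, b*_N) satisfies b*_n > 0 for all n, ∑_{n=1}^N b*_n = B, and there exists ζ > 0 with g_n′(b*_n) = ζ for every n, then (b*_1, …, b*_N) maximizes ∑_{n=1}^N [(1 − α)·f*_n(b_n) + α·log(1 + f*_n(b_n))] over all (b_1, …, b_N) with b_n ≥ 0 and ∑_{n=1}^N b_n = B. -/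
/-!
`f*_n` is the inverse on `[0, ∞)` of `b_n`, a sum of increasing convex fractions
`A f / (1 - C f)`; the inverse of an increasing convex function is increasing and concave, and
composing with the increasing concave map `u ↦ (1 - α) u + α log (1 + u)` keeps both properties.
For optimality, concavity gives the tangent-line bound `g_n b ≤ g_n b*_n + ζ (b - b*_n)`; summed
over `n`, the linear terms cancel because both allocations exhaust `B`.
-/

open Set

lemma one_sub_mul_pos {C f : ℝ} (hC : 0 < C) (hf : f ∈ Iio (1 / C)) : 0 < 1 - C * f := by
  rw [mem_Iio, lt_div_iff₀ hC] at hf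
  linarith

lemma strictMonoOn_mul_div_one_sub_mul {A C : ℝ} (hA : 0 < A) (hC : 0 < C) :
    StrictMonoOn (fun f => A * f / (1 - C * f)) (Iio (1 / C)) := by
  intro u hu v hv huv
  rw [div_lt_div_iff₀ (one_sub_mul_pos hC hu) (one_sub_mul_pos hC hv)]
  nlinarith

lemma convexOn_mul_div_one_sub_mul {A C : ℝ} (hA : 0 ≤ A) (hC : 0 < C) :
    ConvexOn ℝ (Iio (1 / C)) (fun f => A * f / (1 - C * f)) := by
  -- `A f / (1 - C f) = (A / C) (1 - C f)⁻¹ - A / C`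
  have hinv : ConvexOn ℝ (Ioi 0) fun x : ℝ => x⁻¹ := by
    simpa using convexOn_zpow (𝕜 := ℝ) (-1)
  have hcomp := hinv.comp_affineMap (AffineMap.const ℝ ℝ (1 : ℝ) - C • AffineMap.id ℝ ℝ)
  have hpre : (AffineMap.const ℝ ℝ (1 : ℝ) - C • AffineMap.id ℝ ℝ) ⁻¹' Ioi 0 = Iio (1 / C) := by
    ext f
    change 0 < 1 - C * f ↔ f < 1 / C
    rw [sub_pos, lt_div_iff₀ hC, mul_comm]
  rw [hpre] at hcomp
  refine ((hcomp.smul (div_nonneg hA hC.le)).add_const (-(A / C))).congr fun f hf => ?_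
  change A / C * (1 - C * f)⁻¹ + -(A / C) = A * f / (1 - C * f)
  have := (one_sub_mul_pos hC hf).ne'
  field_simp
  ring

lemma ConvexOn.finset_sum {ι E : Type*} [AddCommGroup E] [Module ℝ E] {S : Set E}
    (hS : Convex ℝ S) (s : Finset ι) {f : ι → E → ℝ} (hf : ∀ i ∈ s, ConvexOn ℝ S (f i)) :
    ConvexOn ℝ S fun x => ∑ i ∈ s, f i x := by
  classical
  induction s using Finset.induction_on with
  | empty => simpa using convexOn_const 0 hS
  | insert i s hi ih =>
    simp only [Finset.sum_insert hi]
    exact (hf i (Finset.mem_insert_self i s)).add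
      (ih fun j hj => hf j (Finset.mem_insert_of_mem hj))

lemma Iio_one_div_sup'_subset {ι : Type*} [Fintype ι] [Nonempty ι] {C : ι → ℝ}
    (hC : ∀ k, 0 < C k) (k : ι) :
    Iio (1 / Finset.univ.sup' Finset.univ_nonempty C) ⊆ Iio (1 / C k) :=
  Iio_subset_Iio (one_div_le_one_div_of_le (hC k) (Finset.le_sup' C (Finset.mem_univ k)))

section SumOfFractions

variable {ι : Type*} [Fintype ι] [Nonempty ι] {A C : ι → ℝ}

lemma strictMonoOn_sum_mul_div_one_sub_mul (hA : ∀ k, 0 < A k) (hC : ∀ k, 0 < C k) :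
    StrictMonoOn (fun f => ∑ k, A k * f / (1 - C k * f))
      (Iio (1 / Finset.univ.sup' Finset.univ_nonempty C)) := fun _ hu _ hv huv =>
  Finset.sum_lt_sum_of_nonempty Finset.univ_nonempty fun k _ =>
    strictMonoOn_mul_div_one_sub_mul (hA k) (hC k) (Iio_one_div_sup'_subset hC k hu)
      (Iio_one_div_sup'_subset hC k hv) huv

lemma convexOn_sum_mul_div_one_sub_mul (hA : ∀ k, 0 ≤ A k) (hC : ∀ k, 0 < C k) :
    ConvexOn ℝ (Iio (1 / Finset.univ.sup' Finset.univ_nonempty C))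
      (fun f => ∑ k, A k * f / (1 - C k * f)) :=
  ConvexOn.finset_sum (convex_Iio _) _ fun k _ =>
    (convexOn_mul_div_one_sub_mul (hA k) (hC k)).subset (Iio_one_div_sup'_subset hC k)
      (convex_Iio _)

end SumOfFractions

lemma MonotoneOn.strictMonoOn_of_leftInvOn {α β : Type*} [LinearOrder α] [LinearOrder β]
    {φ : α → β} {F : β → α} {S : Set α} {T : Set β} (hφ : MonotoneOn φ S) (hF : MapsTo F T S)
    (hinv : LeftInvOn φ F T) : StrictMonoOn F T := by
  intro x hx y hy hxy
  by_contra! h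
  exact hxy.not_ge (by simpa only [hinv hx, hinv hy] using hφ (hF hy) (hF hx) h)

lemma ConvexOn.concaveOn_of_leftInvOn {φ F : ℝ → ℝ} {S T : Set ℝ} (hφ : ConvexOn ℝ S φ)
    (hφ_mono : StrictMonoOn φ S) (hT : Convex ℝ T) (hF : MapsTo F T S)
    (hinv : LeftInvOn φ F T) : ConcaveOn ℝ T F := by
  refine ⟨hT, fun x hx y hy t s ht hs hts => ?_⟩
  have hmem := hφ.1 (hF hx) (hF hy) ht hs hts
  have hz := hT hx hy ht hs hts
  refine (hφ_mono.le_iff_le hmem (hF hz)).1 ?_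
  calc φ (t • F x + s • F y) ≤ t • φ (F x) + s • φ (F y) := hφ.2 (hF hx) (hF hy) ht hs hts
    _ = φ (F (t • x + s • y)) := by rw [hinv hx, hinv hy, hinv hz]

/-- The paper's `g_n` is `fairBenefit α ∘ f*_n`. -/
noncomputable def fairBenefit (a u : ℝ) : ℝ := (1 - a) * u + a * Real.log (1 + u)

lemma strictMonoOn_fairBenefit {a : ℝ} (ha0 : 0 ≤ a) (ha1 : a ≤ 1) :
    StrictMonoOn (fairBenefit a) (Ioi (-1)) := by
  intro u hu v hv huv
  have hlog : Real.log (1 + u) < Real.log (1 + v) :=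
    Real.log_lt_log (by linarith [mem_Ioi.1 hu]) (by linarith)
  rcases ha0.eq_or_lt with rfl | ha
  · simpa [fairBenefit] using huv
  · unfold fairBenefit
    nlinarith [mul_lt_mul_of_pos_left hlog ha]

lemma concaveOn_fairBenefit {a : ℝ} (ha0 : 0 ≤ a) :
    ConcaveOn ℝ (Ioi (-1)) (fairBenefit a) := by
  have hlog : ConcaveOn ℝ (Ioi (-1)) fun u : ℝ => Real.log (1 + u) := by
    have := strictConcaveOn_log_Ioi.concaveOn.translate_right 1
    have hpre : (fun z : ℝ => 1 + z) ⁻¹' Ioi 0 = Ioi (-1) := by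
      ext u; simp [neg_lt_iff_pos_add']
    rwa [hpre] at this
  exact ((LinearMap.mulLeft ℝ (1 - a)).concaveOn (convex_Ioi _)).add (hlog.smul ha0)

lemma ConcaveOn.comp_of_mapsTo {E : Type*} [AddCommGroup E] [Module ℝ E] {f : E → ℝ}
    {g : ℝ → ℝ} {s : Set E} {t : Set ℝ} (hg : ConcaveOn ℝ t g)
    (hg_mono : MonotoneOn g t) (hf : ConcaveOn ℝ s f) (hst : MapsTo f s t) :
    ConcaveOn ℝ s (g ∘ f) :=
  ⟨hf.1, fun _ hx _ hy _ _ ha hb hab =>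
    (hg.2 (hst hx) (hst hy) ha hb hab).trans <|
      hg_mono (hg.1 (hst hx) (hst hy) ha hb hab) (hst (hf.1 hx hy ha hb hab))
        (hf.2 hx hy ha hb hab)⟩

lemma ConcaveOn.le_add_deriv_mul_sub {g : ℝ → ℝ} {S : Set ℝ} {x y : ℝ} (hg : ConcaveOn ℝ S g)
    (hx : x ∈ S) (hy : y ∈ S) (hd : DifferentiableAt ℝ g x) :
    g y ≤ g x + deriv g x * (y - x) := by
  rcases lt_trichotomy y x with hyx | rfl | hxy
  · have := hg.deriv_le_slope hy hx hyx hd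
    rw [slope_def_field, le_div_iff₀ (sub_pos.2 hyx)] at this
    linarith
  · simp
  · have := hg.slope_le_deriv hx hy hxy hd
    rw [slope_def_field, div_le_iff₀ (sub_pos.2 hxy)] at this
    linarith

lemma Finset.sum_le_sum_of_le_add_mul_sub {ι : Type*} (s : Finset ι) {g : ι → ℝ → ℝ}
    {b b' : ι → ℝ} {ζ : ℝ} (hg : ∀ i ∈ s, g i (b i) ≤ g i (b' i) + ζ * (b i - b' i))
    (hsum : ∑ i ∈ s, b i = ∑ i ∈ s, b' i) :
    ∑ i ∈ s, g i (b i) ≤ ∑ i ∈ s, g i (b' i) :=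
  calc ∑ i ∈ s, g i (b i) ≤ ∑ i ∈ s, (g i (b' i) + ζ * (b i - b' i)) := Finset.sum_le_sum hg
    _ = ∑ i ∈ s, g i (b' i) := by
      rw [Finset.sum_add_distrib, ← Finset.mul_sum, Finset.sum_sub_distrib, hsum, sub_self,
        mul_zero, add_zero]

theorem stmt_14_general {N : ℕ} (ι : Fin N → Type*) [∀ n, Fintype (ι n)] [∀ n, Nonempty (ι n)]
    (α c : ∀ n, ι n → ℝ)
    (hα : ∀ n k, 0 < α n k) (hc : ∀ n k, 0 < c n k)
    (fstar : Fin N → ℝ → ℝ)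
    (hrange : ∀ n, ∀ x : ℝ, 0 ≤ x →
      fstar n x ∈ Set.Ico (0 : ℝ) (1 / Finset.univ.sup' Finset.univ_nonempty (c n)))
    (hinv : ∀ n, ∀ x : ℝ, 0 ≤ x →
      ∑ k, α n k * fstar n x / (1 - c n k * fstar n x) = x)
    (B : ℝ)
    (a : ℝ) (ha0 : 0 ≤ a) (ha1 : a ≤ 1) :
    (∀ n, StrictMonoOn
        (fun b => (1 - a) * fstar n b + a * Real.log (1 + fstar n b)) (Set.Ici 0) ∧
      ConcaveOn ℝ (Set.Ici 0)
        (fun b => (1 - a) * fstar n b + a * Real.log (1 + fstar n b))) ∧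
    (∀ bstar : Fin N → ℝ, (∀ n, 0 < bstar n) → ∑ n, bstar n = B →
      ∀ ζ : ℝ, 0 < ζ →
      (∀ n, deriv (fun b => (1 - a) * fstar n b + a * Real.log (1 + fstar n b))
          (bstar n) = ζ) →
      ∀ b : Fin N → ℝ, (∀ n, 0 ≤ b n) → ∑ n, b n = B →
        ∑ n, ((1 - a) * fstar n (b n) + a * Real.log (1 + fstar n (b n))) ≤
          ∑ n, ((1 - a) * fstar n (bstar n) + a * Real.log (1 + fstar n (bstar n)))) := by
  have hg : ∀ n, StrictMonoOn (fairBenefit a ∘ fstar n) (Ici 0) ∧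
      ConcaveOn ℝ (Ici 0) (fairBenefit a ∘ fstar n) := by
    intro n
    have hmaps : MapsTo (fstar n) (Ici 0)
        (Iio (1 / Finset.univ.sup' Finset.univ_nonempty (c n))) := fun x hx => (hrange n x hx).2
    have hleft : LeftInvOn (fun f => ∑ k, α n k * f / (1 - c n k * f)) (fstar n) (Ici 0) :=
      fun x hx => hinv n x hx
    have hpos : MapsTo (fstar n) (Ici 0) (Ioi (-1)) := fun x hx =>
      neg_one_lt_zero.trans_le (hrange n x hx).1
    have hsum_mono := strictMonoOn_sum_mul_div_one_sub_mul (hα n) (hc n)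
    have hF_mono := hsum_mono.monotoneOn.strictMonoOn_of_leftInvOn hmaps hleft
    have hF_conc := ConvexOn.concaveOn_of_leftInvOn
      (convexOn_sum_mul_div_one_sub_mul (fun k => (hα n k).le) (hc n)) hsum_mono (convex_Ici 0)
      hmaps hleft
    have hbenefit_mono := strictMonoOn_fairBenefit ha0 ha1
    exact ⟨hbenefit_mono.comp hF_mono hpos,
      (concaveOn_fairBenefit ha0).comp_of_mapsTo hbenefit_mono.monotoneOn hF_conc hpos⟩
  refine ⟨hg, fun bstar hbstar hbstar_sum ζ hζ hderiv b hb hb_sum => ?_⟩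
  refine Finset.sum_le_sum_of_le_add_mul_sub (g := fun n => fairBenefit a ∘ fstar n) (ζ := ζ) _
    (fun n _ => ?_) (hb_sum.trans hbstar_sum.symm)
  have hderiv_n : deriv (fairBenefit a ∘ fstar n) (bstar n) = ζ := hderiv n
  have hd := differentiableAt_of_deriv_ne_zero (hderiv_n.trans_ne hζ.ne')
  simpa only [hderiv_n] using
    (hg n).2.le_add_deriv_mul_sub (mem_Ici.2 (hbstar n).le) (mem_Ici.2 (hb n)) hd

/-- (Proposition 3) For `α ∈ [0,1]`, each fairness-adjusted benefit
`g_n(b) = (1−α) f*_n(b) + α log(1 + f*_n(b))` is strictly increasing and concave on `[0,∞)`;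
moreover any positive allocation exhausting `B` that equalizes marginal benefits
`g_n′(b*_n) = ζ > 0` maximizes `∑_n g_n(b_n)` over the feasible set. -/
theorem stmt_14 {N : ℕ} (ι : Fin N → Type*) [∀ n, Fintype (ι n)] [∀ n, Nonempty (ι n)]
    (α c : ∀ n, ι n → ℝ)
    (hα : ∀ n k, 0 < α n k) (hc : ∀ n k, 0 < c n k)
    (fstar : Fin N → ℝ → ℝ)
    (hrange : ∀ n, ∀ x : ℝ, 0 ≤ x →
      fstar n x ∈ Set.Ico (0 : ℝ) (1 / Finset.univ.sup' Finset.univ_nonempty (c n)))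
    (hinv : ∀ n, ∀ x : ℝ, 0 ≤ x →
      ∑ k, α n k * fstar n x / (1 - c n k * fstar n x) = x)
    (B : ℝ) (hB : 0 < B)
    (a : ℝ) (ha0 : 0 ≤ a) (ha1 : a ≤ 1) :
    (∀ n, StrictMonoOn
        (fun b => (1 - a) * fstar n b + a * Real.log (1 + fstar n b)) (Set.Ici 0) ∧
      ConcaveOn ℝ (Set.Ici 0)
        (fun b => (1 - a) * fstar n b + a * Real.log (1 + fstar n b))) ∧
    (∀ bstar : Fin N → ℝ, (∀ n, 0 < bstar n) → ∑ n, bstar n = B →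
      ∀ ζ : ℝ, 0 < ζ →
      (∀ n, deriv (fun b => (1 - a) * fstar n b + a * Real.log (1 + fstar n b))
          (bstar n) = ζ) →
      ∀ b : Fin N → ℝ, (∀ n, 0 ≤ b n) → ∑ n, b n = B →
        ∑ n, ((1 - a) * fstar n (b n) + a * Real.log (1 + fstar n (b n))) ≤
          ∑ n, ((1 - a) * fstar n (bstar n) + a * Real.log (1 + fstar n (bstar n)))) :=
  stmt_14_general ι α c hα hc fstar hrange hinv B a ha0 ha1
end

section
/- The inverse f* of b satisfies f*(x) < 1/max_{k∈K} c_k for every x ≥ 0, f*(x) → 1/max_{k∈K} c_k as x → ∞, and (f*)′(x) → 0 as x → ∞. -/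
/-!
On `[0, 1 / max c)` the bandwidth `b` is strictly increasing, so its inverse `f*` is pinned down
by order alone: it is continuous, and it exceeds any `a < 1 / max c` as soon as `x > b a`.
By the inverse function rule `(f*)′ = 1 / b′ ∘ f*`, and `b′ f ≥ α k / (1 - c k * f) ^ 2` for the
index `k` with `c k = max c`, which blows up as `f` increases to `1 / max c`.
-/

open Filter Set Topology Finset

section LocalLeftInverse

variable {α β : Type*} [LinearOrder α] [TopologicalSpace α] [OrderTopology α] [DenselyOrdered α]
  [LinearOrder β] [TopologicalSpace β] [OrderTopology β]
  {f : α → β} {g : β → α} {s : Set α} {a : β}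

theorem StrictMonoOn.eventually_lt_of_local_left_inverse (hf : StrictMonoOn f s)
    (hs : s ∈ 𝓝 (g a)) (hgs : ∀ᶠ y in 𝓝 a, g y ∈ s) (hfg : ∀ᶠ y in 𝓝 a, f (g y) = y)
    {u : α} (hu : u < g a) : ∀ᶠ y in 𝓝 a, u < g y := by
  obtain ⟨l, ⟨hul, hl⟩, hls⟩ := exists_Ioc_subset_of_mem_nhds' hs hu
  obtain ⟨v, hlv, hv⟩ := exists_between hl
  have hvs : v ∈ s := hls ⟨hlv, hv.le⟩
  have hfv : f v < a := hfg.self_of_nhds ▸ hf hvs (mem_of_mem_nhds hs) hv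
  filter_upwards [hgs, hfg, Ioi_mem_nhds hfv] with y hys hy hvy
  exact hul.trans_lt (hlv.trans ((hf.lt_iff_lt hvs hys).mp (hy.symm ▸ hvy)))

theorem StrictMonoOn.continuousAt_of_local_left_inverse (hf : StrictMonoOn f s)
    (hs : s ∈ 𝓝 (g a)) (hgs : ∀ᶠ y in 𝓝 a, g y ∈ s) (hfg : ∀ᶠ y in 𝓝 a, f (g y) = y) :
    ContinuousAt g a :=
  tendsto_order.2 ⟨fun _ hu ↦ hf.eventually_lt_of_local_left_inverse hs hgs hfg hu,
    fun _ hu ↦ hf.dual.eventually_lt_of_local_left_inverse hs hgs hfg hu⟩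

end LocalLeftInverse

theorem MonotoneOn.tendsto_nhdsLT_of_left_inverse_atTop {α β : Type*} [LinearOrder α]
    [TopologicalSpace α] [OrderTopology α] [Preorder β] [NoMaxOrder β] {f : α → β} {g : β → α}
    {p q : α} (hf : MonotoneOn f (Ico p q)) (hg : ∀ᶠ y in atTop, g y ∈ Ico p q)
    (hfg : ∀ᶠ y in atTop, f (g y) = y) : Tendsto g atTop (𝓝[<] q) := by
  refine tendsto_nhdsWithin_iff.2 ⟨tendsto_order.2 ⟨fun u hu ↦ ?_, fun u hu ↦ ?_⟩,
    hg.mono fun _ hy ↦ hy.2⟩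
  · rcases lt_or_ge u p with hup | hpu
    · exact hg.mono fun y hy ↦ hup.trans_le hy.1
    filter_upwards [hg, hfg, eventually_gt_atTop (f u)] with y hy hfy hlt
    by_contra! hyu
    exact (hfy ▸ hlt).not_ge (hf hy ⟨hpu, hu⟩ hyu)
  · exact hg.mono fun y hy ↦ hy.2.trans hu

section Bandwidth

variable {ι : Type*} [Fintype ι] (α c : ι → ℝ)

noncomputable def bandwidth (f : ℝ) : ℝ := ∑ k, α k * f / (1 - c k * f)

noncomputable def bandwidthDeriv (f : ℝ) : ℝ := ∑ k, α k / (1 - c k * f) ^ 2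

variable {α c}

theorem bandwidth_zero : bandwidth α c 0 = 0 := by simp [bandwidth]

theorem hasDerivAt_bandwidth {f : ℝ} (hf : ∀ k, 1 - c k * f ≠ 0) :
    HasDerivAt (bandwidth α c) (bandwidthDeriv α c f) f := by
  refine HasDerivAt.fun_sum fun k _ ↦ ?_
  have hid := hasDerivAt_id' f
  exact ((hid.const_mul (α k)).fun_div ((hid.const_mul (c k)).const_sub 1) (hf k)).congr_deriv
    (by ring)

theorem bandwidthDeriv_pos [Nonempty ι] (hα : ∀ k, 0 < α k) {f : ℝ}
    (hf : ∀ k, 1 - c k * f ≠ 0) : 0 < bandwidthDeriv α c f :=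
  sum_pos (fun k _ ↦ div_pos (hα k) (sq_pos_of_ne_zero (hf k))) univ_nonempty

theorem bandwidth_strictMonoOn [Nonempty ι] (hα : ∀ k, 0 < α k) :
    StrictMonoOn (bandwidth α c) {f | ∀ k, c k * f < 1} := by
  intro f hf g hg hfg
  refine sum_lt_sum_of_nonempty univ_nonempty fun k _ ↦ ?_
  rw [div_lt_div_iff₀ (sub_pos.2 (hf k)) (sub_pos.2 (hg k))]
  nlinarith [mul_lt_mul_of_pos_left hfg (hα k)]

theorem Ico_subset_setOf_mul_lt_one [Nonempty ι] :
    Ico 0 (1 / univ.sup' univ_nonempty c) ⊆ {f | ∀ k, c k * f < 1} := by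
  rintro f ⟨hf0, hf⟩ k
  have hM := one_div_pos.1 (hf0.trans_lt hf)
  calc c k * f ≤ univ.sup' univ_nonempty c * f :=
        mul_le_mul_of_nonneg_right (le_sup' c (mem_univ k)) hf0
    _ < 1 := by rwa [lt_div_iff₀ hM, mul_comm] at hf

theorem tendsto_bandwidthDeriv_nhdsLT [Nonempty ι] (hα : ∀ k, 0 < α k)
    (hM : 0 < univ.sup' univ_nonempty c) :
    Tendsto (bandwidthDeriv α c) (𝓝[<] (1 / univ.sup' univ_nonempty c)) atTop := by
  set M := univ.sup' univ_nonempty c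
  obtain ⟨k, -, hk⟩ := exists_mem_eq_sup' univ_nonempty c
  have hgap : Tendsto (fun f ↦ (1 - M * f) ^ 2) (𝓝[<] (1 / M)) (𝓝[>] 0) := by
    refine tendsto_nhdsWithin_iff.2 ⟨?_, ?_⟩
    · have : Tendsto (fun f ↦ (1 - M * f) ^ 2) (𝓝 (1 / M)) (𝓝 ((1 - M * (1 / M)) ^ 2)) :=
        ((continuous_const.sub (continuous_const.mul continuous_id)).pow 2).tendsto _
      simpa [hM.ne'] using this.mono_left nhdsWithin_le_nhds
    · filter_upwards [self_mem_nhdsWithin] with f hf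
      have : M * f < 1 := by rwa [Set.mem_Iio, lt_div_iff₀ hM, mul_comm] at hf
      exact pow_pos (sub_pos.2 this) 2
  refine tendsto_atTop_mono (fun f ↦ ?_)
    ((tendsto_inv_nhdsGT_zero.comp hgap).const_mul_atTop (hα k))
  calc α k * ((1 - M * f) ^ 2)⁻¹ = α k / (1 - c k * f) ^ 2 := by rw [← hk, div_eq_mul_inv]
    _ ≤ bandwidthDeriv α c f :=
      single_le_sum (f := fun j ↦ α j / (1 - c j * f) ^ 2)
        (fun j _ ↦ div_nonneg (hα j).le (sq_nonneg _)) (mem_univ k)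

theorem hasDerivAt_bandwidth_left_inverse [Nonempty ι] (hα : ∀ k, 0 < α k) {fstar : ℝ → ℝ}
    (hrange : ∀ x, 0 ≤ x → fstar x ∈ Ico 0 (1 / univ.sup' univ_nonempty c))
    (hinv : ∀ x, 0 ≤ x → bandwidth α c (fstar x) = x) {x : ℝ} (hx : 0 < x) :
    HasDerivAt fstar (bandwidthDeriv α c (fstar x))⁻¹ x := by
  have hgs : ∀ᶠ y in 𝓝 x, fstar y ∈ Ico 0 (1 / univ.sup' univ_nonempty c) :=
    eventually_of_mem (Ioi_mem_nhds hx) fun y hy ↦ hrange y (le_of_lt hy)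
  have hfg : ∀ᶠ y in 𝓝 x, bandwidth α c (fstar y) = y :=
    eventually_of_mem (Ioi_mem_nhds hx) fun y hy ↦ hinv y (le_of_lt hy)
  have hpos : 0 < fstar x := (hrange x hx.le).1.lt_of_ne fun h ↦
    hx.ne' (by rw [← hinv x hx.le, ← h, bandwidth_zero])
  have hmono := (bandwidth_strictMonoOn (c := c) hα).mono Ico_subset_setOf_mul_lt_one
  have hcont : ContinuousAt fstar x :=
    hmono.continuousAt_of_local_left_inverse (Ico_mem_nhds hpos (hrange x hx.le).2) hgs hfg
  have hden : ∀ k, 1 - c k * fstar x ≠ 0 := fun k ↦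
    (sub_pos.2 (Ico_subset_setOf_mul_lt_one (hrange x hx.le) k)).ne'
  exact (hasDerivAt_bandwidth hden).of_local_left_inverse hcont (bandwidthDeriv_pos hα hden).ne' hfg

end Bandwidth

/-- The inverse `f*` of `b` satisfies `f*(x) < 1/max_k c_k` for all `x ≥ 0`,
`f*(x) → 1/max_k c_k` as `x → ∞`, and `(f*)′(x) → 0` as `x → ∞`. -/
theorem stmt_17 {ι : Type*} [Fintype ι] [Nonempty ι] (α c : ι → ℝ)
    (hα : ∀ k, 0 < α k) (hc : ∀ k, 0 < c k)
    (fstar : ℝ → ℝ)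
    (hrange : ∀ x : ℝ, 0 ≤ x →
      fstar x ∈ Set.Ico (0 : ℝ) (1 / Finset.univ.sup' Finset.univ_nonempty c))
    (hinv : ∀ x : ℝ, 0 ≤ x → ∑ k, α k * fstar x / (1 - c k * fstar x) = x) :
    (∀ x : ℝ, 0 ≤ x → fstar x < 1 / Finset.univ.sup' Finset.univ_nonempty c) ∧
    Filter.Tendsto fstar Filter.atTop
      (nhds (1 / Finset.univ.sup' Finset.univ_nonempty c)) ∧
    Filter.Tendsto (deriv fstar) Filter.atTop (nhds 0) := by
  have hM : 0 < univ.sup' univ_nonempty c :=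
    (lt_sup'_iff univ_nonempty).2 ⟨Classical.arbitrary ι, mem_univ _, hc _⟩
  have htend : Tendsto fstar atTop (𝓝[<] (1 / univ.sup' univ_nonempty c)) :=
    ((bandwidth_strictMonoOn hα).mono Ico_subset_setOf_mul_lt_one).monotoneOn
      |>.tendsto_nhdsLT_of_left_inverse_atTop ((eventually_ge_atTop 0).mono hrange)
        ((eventually_ge_atTop 0).mono hinv)
  refine ⟨fun x hx ↦ (hrange x hx).2, tendsto_nhds_of_tendsto_nhdsWithin htend, ?_⟩
  refine ((tendsto_bandwidthDeriv_nhdsLT hα hM).comp htend).inv_tendsto_atTop.congr' ?_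
  filter_upwards [eventually_gt_atTop 0] with x hx
  exact (hasDerivAt_bandwidth_left_inverse hα hrange hinv hx).deriv.symm
end
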